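/- Let G ∈ 𝕆^{n×k} with tr(GᵀD) ≠ 0 be a local maximizer of η on 𝕆^{n×k}. Then for every nonzero real n×k matrix H satisfying HᵀG = −GᵀH, it holds that tr(DᵀH)² ≤ η(G)·(tr(HᵀAH) − tr(H M(G) Hᵀ)). -/

import Mathlib

/-!
Every tangent vector `T` at `G` (that is, `TᵀG` skew) is the velocity of the curve
`γ t = exp(tZ) G` on the Stiefel manifold, where `Z` is skew with `ZG = T`; its acceleration
`W = ZT` satisfies `WᵀG = -TᵀT`. Cleared of denominators, `η(γ t) ≤ η(G)` says that
`g t = tr(GᵀD)² tr(γᵀAγ) - tr(GᵀAG) tr(γᵀD)²` has a local minimum at `0`, hence `g'(0) = 0` and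
`g''(0) ≥ 0`. The first-order condition for every `T` puts `AG - ξD` in the normal space
`{GS | S symmetric}`, which forces `AG - ξD = G M(G)`; with this, `g''(0) ≥ 0` for `T = H` is the
claimed inequality.
-/

open Matrix

/-- The objective `η(G) = tr(GᵀD)² / tr(GᵀAG)`. -/
noncomputable def eta {n k : ℕ} (A : Matrix (Fin n) (Fin n) ℝ)
    (D G : Matrix (Fin n) (Fin k) ℝ) : ℝ :=
  (Matrix.trace (Gᵀ * D)) ^ 2 / Matrix.trace (Gᵀ * A * G)

/-- `ξ(G) = tr(GᵀAG) / tr(GᵀD)`. -/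
noncomputable def xi {n k : ℕ} (A : Matrix (Fin n) (Fin n) ℝ)
    (D G : Matrix (Fin n) (Fin k) ℝ) : ℝ :=
  Matrix.trace (Gᵀ * A * G) / Matrix.trace (Gᵀ * D)

/-- `sym(B) = (B + Bᵀ)/2`. -/
noncomputable def symPart {k : ℕ} (B : Matrix (Fin k) (Fin k) ℝ) : Matrix (Fin k) (Fin k) ℝ :=
  (1 / 2 : ℝ) • (B + Bᵀ)

/-- `M(G) = sym(GᵀAG − ξ(G)·GᵀD)`. -/
noncomputable def Mmat {n k : ℕ} (A : Matrix (Fin n) (Fin n) ℝ)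
    (D G : Matrix (Fin n) (Fin k) ℝ) : Matrix (Fin k) (Fin k) ℝ :=
  symPart (Gᵀ * A * G - xi A D G • (Gᵀ * D))

/-- `E(G) = A − ξ(G)·(DGᵀ + GDᵀ)`. -/
noncomputable def Emat {n k : ℕ} (A : Matrix (Fin n) (Fin n) ℝ)
    (D G : Matrix (Fin n) (Fin k) ℝ) : Matrix (Fin n) (Fin n) ℝ :=
  A - xi A D G • (D * Gᵀ + G * Dᵀ)

/-- The Frobenius norm of a real matrix. -/
noncomputable def frobNorm {n k : ℕ} (M : Matrix (Fin n) (Fin k) ℝ) : ℝ :=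
  Real.sqrt (∑ i, ∑ j, (M i j) ^ 2)

/-- `G` is a local maximizer of `η` on the Stiefel manifold `𝕆^{n×k}`. -/
def IsLocalMaxEta {n k : ℕ} (A : Matrix (Fin n) (Fin n) ℝ)
    (D G : Matrix (Fin n) (Fin k) ℝ) : Prop :=
  Gᵀ * G = 1 ∧ ∃ ε > (0 : ℝ), ∀ G' : Matrix (Fin n) (Fin k) ℝ,
    G'ᵀ * G' = 1 → frobNorm (G' - G) < ε → eta A D G' ≤ eta A D G

open Topology

theorem IsLocalMin.nonneg_of_hasDerivAt {f f' : ℝ → ℝ} {a f'' : ℝ} (h : IsLocalMin f a)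
    (hf : ∀ x, HasDerivAt f (f' x) x) (hf' : HasDerivAt f' f'' a) : 0 ≤ f'' := by
  have hderiv : deriv f = f' := funext fun x => (hf x).deriv
  by_contra! hneg
  have hmax : IsLocalMax f a :=
    isLocalMax_of_deriv_deriv_neg (by rwa [hderiv, hf'.deriv])
      (by rw [hderiv]; exact h.hasDerivAt_eq_zero (hf a)) (hf a).continuousAt
  have hconst : f =ᶠ[𝓝 a] fun _ => f a :=
    (h.and hmax).mono fun x hx => le_antisymm hx.2 hx.1
  have hf'_zero : f' =ᶠ[𝓝 a] fun _ => 0 :=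
    hconst.eventuallyEq_nhds.mono fun x hx => by
      rw [← hderiv, hx.deriv_eq, deriv_const]
  exact hneg.ne (hf'.unique ((hasDerivAt_const a 0).congr_of_eventuallyEq hf'_zero))

section MatrixCalculus

attribute [local instance] Matrix.linftyOpNormedAddCommGroup Matrix.linftyOpNormedSpace

variable {𝕜 : Type*} [NontriviallyNormedField 𝕜] [CompleteSpace 𝕜]
  {l m p : Type*} [Fintype l] [Fintype m] [Fintype p] {t : 𝕜}

theorem HasDerivAt.matrix_mul {u : 𝕜 → Matrix l m 𝕜} {v : 𝕜 → Matrix m p 𝕜}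
    {u' : Matrix l m 𝕜} {v' : Matrix m p 𝕜} (hu : HasDerivAt u u' t) (hv : HasDerivAt v v' t) :
    HasDerivAt (fun s => u s * v s) (u' * v t + u t * v') t := by
  rw [add_comm]
  exact (mulLinearMap 𝕜).toContinuousBilinearMap.hasDerivAt_of_bilinear (fun _ => hu) fun _ => hv

theorem HasDerivAt.matrix_transpose {u : 𝕜 → Matrix l m 𝕜} {u' : Matrix l m 𝕜}
    (hu : HasDerivAt u u' t) : HasDerivAt (fun s => (u s)ᵀ) u'ᵀ t :=
  (transposeLinearEquiv l m 𝕜 𝕜).toLinearMap.toContinuousLinearMap.hasFDerivAt.comp_hasDerivAt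
    t hu

theorem HasDerivAt.matrix_trace {u : 𝕜 → Matrix m m 𝕜} {u' : Matrix m m 𝕜}
    (hu : HasDerivAt u u' t) : HasDerivAt (fun s => (u s).trace) u'.trace t :=
  (traceLinearMap m 𝕜 𝕜).toContinuousLinearMap.hasFDerivAt.comp_hasDerivAt t hu

theorem HasDerivAt.trace_transpose_mul {u : 𝕜 → Matrix l m 𝕜} {u' : Matrix l m 𝕜}
    (hu : HasDerivAt u u' t) (D : Matrix l m 𝕜) :
    HasDerivAt (fun s => ((u s)ᵀ * D).trace) (u'ᵀ * D).trace t := by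
  simpa using (hu.matrix_transpose.matrix_mul (hasDerivAt_const t D)).matrix_trace

theorem HasDerivAt.trace_transpose_mul_mul {u v : 𝕜 → Matrix l m 𝕜} {u' v' : Matrix l m 𝕜}
    (hu : HasDerivAt u u' t) (hv : HasDerivAt v v' t) (A : Matrix l l 𝕜) :
    HasDerivAt (fun s => ((u s)ᵀ * A * v s).trace)
      ((u'ᵀ * A * v t).trace + ((u t)ᵀ * A * v').trace) t := by
  simpa [trace_add] using
    ((hu.matrix_transpose.matrix_mul (hasDerivAt_const t A)).matrix_mul hv).matrix_trace

end MatrixCalculus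

section Stiefel

attribute [local instance] Matrix.linftyOpNormedAddCommGroup Matrix.linftyOpNormedSpace
  Matrix.linftyOpNormedRing Matrix.linftyOpNormedAlgebra

variable {m p : Type*} [Fintype m] {G T : Matrix m p ℝ}

def tangentGenerator [Fintype p] (G T : Matrix m p ℝ) : Matrix m m ℝ :=
  T * Gᵀ - G * Tᵀ - G * (Gᵀ * T) * Gᵀ

theorem transpose_tangentGenerator [Fintype p] (hT : Tᵀ * G = -(Gᵀ * T)) :
    (tangentGenerator G T)ᵀ = -tangentGenerator G T := by
  simp only [tangentGenerator, transpose_sub, transpose_mul, transpose_transpose, hT,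
    Matrix.neg_mul, Matrix.mul_neg, Matrix.mul_assoc]
  abel

theorem tangentGenerator_mul [Fintype p] [DecidableEq p] (hG : Gᵀ * G = 1)
    (hT : Tᵀ * G = -(Gᵀ * T)) : tangentGenerator G T * G = T := by
  simp only [tangentGenerator, Matrix.sub_mul, Matrix.mul_assoc, hG, hT, Matrix.mul_one,
    Matrix.mul_neg]
  abel

theorem transpose_exp_smul_mul_self [DecidableEq m] [DecidableEq p] {Z : Matrix m m ℝ}
    (hZ : Zᵀ = -Z) (hG : Gᵀ * G = 1) (t : ℝ) :
    (NormedSpace.exp (t • Z) * G)ᵀ * (NormedSpace.exp (t • Z) * G) = 1 := by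
  have hexp : (NormedSpace.exp (t • Z))ᵀ * NormedSpace.exp (t • Z) = 1 := by
    rw [← Matrix.exp_transpose, transpose_smul, hZ, smul_neg,
      ← Matrix.exp_add_of_commute _ _ (Commute.refl (t • Z)).neg_left, neg_add_cancel,
      NormedSpace.exp_zero]
  rw [transpose_mul, Matrix.mul_assoc, ← Matrix.mul_assoc _ _ G, hexp, Matrix.one_mul, hG]

theorem hasDerivAt_exp_smul_mul [DecidableEq m] [Fintype p] (Z : Matrix m m ℝ)
    (X : Matrix m p ℝ) (t : ℝ) :
    HasDerivAt (fun s : ℝ => NormedSpace.exp (s • Z) * X)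
      (NormedSpace.exp (t • Z) * (Z * X)) t :=
  ((hasDerivAt_exp_smul_const Z t).matrix_mul (hasDerivAt_const t X)).congr_deriv
    (by rw [Matrix.mul_zero, add_zero, Matrix.mul_assoc]; rfl)

theorem exists_stiefel_curve [DecidableEq m] [Fintype p] [DecidableEq p] (hG : Gᵀ * G = 1)
    (hT : Tᵀ * G = -(Gᵀ * T)) :
    ∃ (γ γ' : ℝ → Matrix m p ℝ) (W : Matrix m p ℝ), γ 0 = G ∧ (∀ t, (γ t)ᵀ * γ t = 1) ∧
      (∀ t, HasDerivAt γ (γ' t) t) ∧ γ' 0 = T ∧ HasDerivAt γ' W 0 ∧ Wᵀ * G = -(Tᵀ * T) := by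
  set Z := tangentGenerator G T
  have hZ : Zᵀ = -Z := transpose_tangentGenerator hT
  have hZG : Z * G = T := tangentGenerator_mul hG hT
  refine ⟨fun t => NormedSpace.exp (t • Z) * G, fun t => NormedSpace.exp (t • Z) * T, Z * T,
    by simp, transpose_exp_smul_mul_self hZ hG, fun t => ?_, by simp, ?_, ?_⟩
  · simpa [hZG] using hasDerivAt_exp_smul_mul Z G t
  · simpa using hasDerivAt_exp_smul_mul Z T 0
  · rw [transpose_mul, hZ, Matrix.mul_assoc, Matrix.neg_mul, hZG, Matrix.mul_neg]

end Stiefel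

section TraceIdentities

variable {m p : Type*} [Fintype m] [Fintype p]

theorem trace_transpose_mul_mul_comm {R : Type*} [CommSemiring R] {A : Matrix m m R}
    (hA : Aᵀ = A) (X Y : Matrix m p R) :
    (Xᵀ * A * Y).trace = (Yᵀ * A * X).trace := by
  rw [← trace_transpose]
  simp [transpose_mul, hA, Matrix.mul_assoc]

theorem trace_mul_eq_zero_of_transpose_eq_neg {K S : Matrix m m ℝ} (hK : Kᵀ = -K)
    (hS : Sᵀ = S) : (K * S).trace = 0 := by
  have h : (K * S).trace = -(K * S).trace :=
    calc (K * S).trace = ((K * S)ᵀ).trace := (trace_transpose _).symm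
      _ = -(K * S).trace := by
        rw [transpose_mul, hS, hK, Matrix.mul_neg, trace_neg, trace_mul_comm]
  linarith

theorem trace_transpose_mul_mul_pos [DecidableEq p] [Nonempty p] {A : Matrix m m ℝ}
    (hA : A.PosDef) {G : Matrix m p ℝ} (hG : Gᵀ * G = 1) : 0 < (Gᵀ * A * G).trace := by
  have hinj : Function.Injective G.mulVec := fun v w h => by
    simpa [mulVec_mulVec, hG] using congrArg (Gᵀ *ᵥ ·) h
  simpa [conjTranspose_eq_transpose_of_trivial] using
    (hA.conjTranspose_mul_mul_same hinj).trace_pos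

end TraceIdentities

theorem continuous_frobNorm {n k : ℕ} :
    Continuous (frobNorm : Matrix (Fin n) (Fin k) ℝ → ℝ) := by
  unfold frobNorm
  fun_prop

theorem transpose_symPart {k : ℕ} (B : Matrix (Fin k) (Fin k) ℝ) : (symPart B)ᵀ = symPart B := by
  rw [symPart, transpose_smul, transpose_add, transpose_transpose, add_comm]

theorem eq_mul_symPart_of_forall_tangent {n k : ℕ} {G R : Matrix (Fin n) (Fin k) ℝ}
    (hG : Gᵀ * G = 1)
    (h : ∀ T : Matrix (Fin n) (Fin k) ℝ, Tᵀ * G = -(Gᵀ * T) → (Tᵀ * R).trace = 0) :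
    R = G * symPart (Gᵀ * R) := by
  have hS := transpose_symPart (Gᵀ * R)
  generalize hSdef : symPart (Gᵀ * R) = S at hS ⊢
  obtain ⟨T, rfl⟩ : ∃ T, T + G * S = R := ⟨R - G * S, sub_add_cancel R (G * S)⟩
  rw [Matrix.mul_add, ← Matrix.mul_assoc, hG, Matrix.one_mul] at hSdef
  have htangent : Tᵀ * G = -(Gᵀ * T) := by
    rw [eq_neg_iff_add_eq_zero]
    calc Tᵀ * G + Gᵀ * T = (2 : ℝ) • (symPart (Gᵀ * T + S) - S) := by
          rw [symPart, transpose_add, hS, transpose_mul, transpose_transpose]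
          module
      _ = 0 := by rw [hSdef, sub_self, smul_zero]
  have hnormal : (Tᵀ * (G * S)).trace = 0 := by
    rw [← Matrix.mul_assoc]
    refine trace_mul_eq_zero_of_transpose_eq_neg ?_ hS
    rw [htangent, transpose_neg, transpose_mul, transpose_transpose, ← htangent]
  have hT : (Tᴴ * T).trace = 0 := by
    have := h T htangent
    rwa [Matrix.mul_add, trace_add, hnormal, add_zero,
      ← conjTranspose_eq_transpose_of_trivial] at this
  rw [trace_conjTranspose_mul_self_eq_zero_iff.mp hT, zero_add]

namespace IsLocalMaxEta

attribute [local instance] Matrix.linftyOpNormedAddCommGroup Matrix.linftyOpNormedSpace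

variable {n k : ℕ} {A : Matrix (Fin n) (Fin n) ℝ} {D G : Matrix (Fin n) (Fin k) ℝ}

theorem isLocalMax_comp (h : IsLocalMaxEta A D G) {γ : ℝ → Matrix (Fin n) (Fin k) ℝ}
    (hγ : Continuous γ) (hγ0 : γ 0 = G) (horth : ∀ t, (γ t)ᵀ * γ t = 1) :
    IsLocalMax (fun t => eta A D (γ t)) 0 := by
  obtain ⟨-, ε, hε, hmax⟩ := h
  have hdist : Continuous fun t => frobNorm (γ t - G) :=
    continuous_frobNorm.comp (hγ.sub continuous_const)
  have hdist0 : frobNorm (γ 0 - G) < ε := by simpa [hγ0, frobNorm] using hε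
  filter_upwards [hdist.continuousAt.eventually_lt continuousAt_const hdist0] with t ht
  rw [hγ0]
  exact hmax (γ t) (horth t) ht

theorem isLocalMin_gap (h : IsLocalMaxEta A D G) (hq0 : 0 < (Gᵀ * A * G).trace)
    {γ : ℝ → Matrix (Fin n) (Fin k) ℝ} (hγ : Continuous γ) (hγ0 : γ 0 = G)
    (horth : ∀ t, (γ t)ᵀ * γ t = 1) :
    IsLocalMin (fun t => (Gᵀ * D).trace ^ 2 * ((γ t)ᵀ * A * γ t).trace
      - (Gᵀ * A * G).trace * ((γ t)ᵀ * D).trace ^ 2) 0 := by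
  have hQ : Continuous fun t => ((γ t)ᵀ * A * γ t).trace :=
    ((hγ.matrix_transpose.matrix_mul continuous_const).matrix_mul hγ).matrix_trace
  have hQ0 : 0 < ((γ 0)ᵀ * A * γ 0).trace := by rwa [hγ0]
  filter_upwards [h.isLocalMax_comp hγ hγ0 horth,
    continuousAt_const.eventually_lt hQ.continuousAt hQ0] with t hη hQt
  rw [hγ0] at hη ⊢
  rw [eta, eta, div_le_div_iff₀ hQt hq0] at hη
  linarith

/-- `W` is the acceleration at `0` of the curve of `exists_stiefel_curve` with velocity `T`; the
two conditions say that the function of `isLocalMin_gap` has zero first and nonnegative second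
derivative at `0` along that curve. -/
theorem exists_firstOrder_secondOrder (h : IsLocalMaxEta A D G) (hA : Aᵀ = A)
    (hq0 : 0 < (Gᵀ * A * G).trace) {T : Matrix (Fin n) (Fin k) ℝ} (hT : Tᵀ * G = -(Gᵀ * T)) :
    ∃ W : Matrix (Fin n) (Fin k) ℝ, Wᵀ * G = -(Tᵀ * T) ∧
      (Gᵀ * D).trace ^ 2 * (Tᵀ * A * G).trace
        = (Gᵀ * A * G).trace * ((Gᵀ * D).trace * (Tᵀ * D).trace) ∧
      (Gᵀ * A * G).trace * ((Tᵀ * D).trace ^ 2 + (Gᵀ * D).trace * (Wᵀ * D).trace)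
        ≤ (Gᵀ * D).trace ^ 2 * ((Tᵀ * A * T).trace + (Wᵀ * A * G).trace) := by
  obtain ⟨γ, γ', W, hγ0, horth, hγ, hγ'0, hW, hWG⟩ := exists_stiefel_curve h.1 hT
  refine ⟨W, hWG, ?_⟩
  have hmin := h.isLocalMin_gap hq0 (continuous_iff_continuousAt.2 fun t => (hγ t).continuousAt)
    hγ0 horth
  set c := (Gᵀ * D).trace
  set q := (Gᵀ * A * G).trace
  have hN : ∀ t, HasDerivAt (fun s => ((γ s)ᵀ * D).trace) ((γ' t)ᵀ * D).trace t :=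
    fun t => (hγ t).trace_transpose_mul D
  have hgap : ∀ t, HasDerivAt
      (fun s => c ^ 2 * ((γ s)ᵀ * A * γ s).trace - q * ((γ s)ᵀ * D).trace ^ 2)
      (c ^ 2 * (((γ' t)ᵀ * A * γ t).trace + ((γ t)ᵀ * A * γ' t).trace)
        - q * (2 * ((γ t)ᵀ * D).trace * ((γ' t)ᵀ * D).trace)) t := fun t => by
    refine ((((hγ t).trace_transpose_mul_mul (hγ t) A).const_mul (c ^ 2)).sub
      (((hN t).pow 2).const_mul q)).congr_deriv ?_
    norm_num
  have hgap' : HasDerivAt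
      (fun t => c ^ 2 * (((γ' t)ᵀ * A * γ t).trace + ((γ t)ᵀ * A * γ' t).trace)
        - q * (2 * ((γ t)ᵀ * D).trace * ((γ' t)ᵀ * D).trace))
      (c ^ 2 * ((Wᵀ * A * G).trace + 2 * (Tᵀ * A * T).trace + (Gᵀ * A * W).trace)
        - 2 * q * ((Tᵀ * D).trace ^ 2 + c * (Wᵀ * D).trace)) 0 := by
    have := (((hW.trace_transpose_mul_mul (hγ 0) A).add
      ((hγ 0).trace_transpose_mul_mul hW A)).const_mul (c ^ 2)).sub
      ((((hN 0).const_mul 2).mul (hW.trace_transpose_mul D)).const_mul q)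
    rw [hγ0, hγ'0] at this
    refine this.congr_deriv ?_
    ring
  have hfirst := hmin.hasDerivAt_eq_zero (hgap 0)
  have hsecond := hmin.nonneg_of_hasDerivAt hgap hgap'
  rw [hγ0, hγ'0, trace_transpose_mul_mul_comm hA G T] at hfirst
  rw [trace_transpose_mul_mul_comm hA G W] at hsecond
  exact ⟨by linarith, by linarith⟩

theorem stationary (h : IsLocalMaxEta A D G) (hA : Aᵀ = A) (hq0 : 0 < (Gᵀ * A * G).trace)
    (htr : (Gᵀ * D).trace ≠ 0) : A * G - xi A D G • D = G * Mmat A D G := by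
  have hMmat : Mmat A D G = symPart (Gᵀ * (A * G - xi A D G • D)) := by
    rw [Mmat, Matrix.mul_sub, Matrix.mul_smul, Matrix.mul_assoc]
  rw [hMmat]
  refine eq_mul_symPart_of_forall_tangent h.1 fun T hT => ?_
  obtain ⟨-, -, hfirst, -⟩ := h.exists_firstOrder_secondOrder hA hq0 hT
  rw [Matrix.mul_sub, Matrix.mul_smul, trace_sub, trace_smul, smul_eq_mul, xi,
    ← Matrix.mul_assoc]
  field_simp
  rw [mul_zero]
  exact mul_right_injective₀ htr (by linear_combination hfirst)

end IsLocalMaxEta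

theorem secondOrder_necessary_of_localMax
    (n k : ℕ) (hk1 : 1 ≤ k)
    (A : Matrix (Fin n) (Fin n) ℝ) (hA : A.PosDef)
    (D : Matrix (Fin n) (Fin k) ℝ)
    (G : Matrix (Fin n) (Fin k) ℝ)
    (htr : Matrix.trace (Gᵀ * D) ≠ 0)
    (hloc : IsLocalMaxEta A D G) :
    ∀ H : Matrix (Fin n) (Fin k) ℝ, H ≠ 0 → Hᵀ * G = -(Gᵀ * H) →
      (Matrix.trace (Dᵀ * H)) ^ 2 ≤
        eta A D G *
          (Matrix.trace (Hᵀ * A * H) - Matrix.trace (H * Mmat A D G * Hᵀ)) := by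
  intro H _ hH
  have hAsymm : Aᵀ = A := by simpa [conjTranspose_eq_transpose_of_trivial] using hA.1.eq
  have : Nonempty (Fin k) := ⟨⟨0, hk1⟩⟩
  have hq0 := trace_transpose_mul_mul_pos hA hloc.1
  have hstat := hloc.stationary hAsymm hq0 htr
  obtain ⟨W, hWG, -, hsecond⟩ := hloc.exists_firstOrder_secondOrder hAsymm hq0 hH
  have hWAG :
      (Wᵀ * A * G).trace = -(H * Mmat A D G * Hᵀ).trace + xi A D G * (Wᵀ * D).trace := by
    rw [Matrix.mul_assoc, ← sub_add_cancel (A * G) (xi A D G • D), hstat, Matrix.mul_add,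
      trace_add, Matrix.mul_smul, trace_smul, smul_eq_mul, ← Matrix.mul_assoc, hWG,
      Matrix.neg_mul, trace_neg, trace_mul_cycle H]
  have hxi : (Gᵀ * D).trace ^ 2 * xi A D G = (Gᵀ * A * G).trace * (Gᵀ * D).trace := by
    rw [xi]
    field_simp
  have hDH : (Dᵀ * H).trace = (Hᵀ * D).trace := by
    rw [← trace_transpose, transpose_mul, transpose_transpose]
  rw [hDH, eta, div_mul_eq_mul_div, le_div_iff₀ hq0]
  linear_combination hsecond + (Gᵀ * D).trace ^ 2 * hWAG + (Wᵀ * D).trace * hxi
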